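/- arXiv:2410.20963 — 6 statements merged into one kernel-verified Lean document; each statement's English description precedes it below -/
import Mathlib

section
/- For a strictly convex compact set M and nonzero p, the function p ↦ ⟨p, s_M(p)⟩ (the support function) is differentiable at p with gradient equal to s_M(p). -/
open RealInnerProductSpace Topology Filter

/-- For a strictly convex compact set `M` and nonzero `p`, the support function
`p ↦ ⟪p, s_M(p)⟫` is differentiable at `p` with gradient `s_M(p)`. -/
theorem support_hasGradientAt {n : ℕ} (M : Set (EuclideanSpace ℝ (Fin n)))
    (hMc : IsCompact M) (hMs : StrictConvex ℝ M)
    (sM : EuclideanSpace ℝ (Fin n) → EuclideanSpace ℝ (Fin n))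
    (hsM : ∀ p : EuclideanSpace ℝ (Fin n), p ≠ 0 →
      sM p ∈ M ∧ IsMaxOn (fun s => ⟪p, s⟫) M (sM p))
    (huniq : ∀ p : EuclideanSpace ℝ (Fin n), p ≠ 0 →
      ∀ s ∈ M, IsMaxOn (fun x => ⟪p, x⟫) M s → s = sM p)
    (p : EuclideanSpace ℝ (Fin n)) (hp : p ≠ 0) :
    HasGradientAt (fun q => ⟪q, sM q⟫) (sM p) p := by
  have hne : ∀ᶠ q in 𝓝 p, q ≠ (0 : EuclideanSpace ℝ (Fin n)) :=
    eventually_ne_nhds hp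
  have hmem : ∀ᶠ q in 𝓝 p, sM q ∈ M := hne.mono fun q hq => (hsM q hq).1
  -- continuity of sM at p
  have hcont : Filter.Tendsto sM (𝓝 p) (𝓝 (sM p)) := by
    refine hMc.tendsto_nhds_of_unique_mapClusterPt hmem fun x hx hcl => ?_
    refine huniq p hp x hx fun m hm => ?_
    rcases mapClusterPt_iff_ultrafilter.1 hcl with ⟨U, hU, hUx⟩
    have hid : Filter.Tendsto (fun q => q) (U : Filter _) (𝓝 p) := hU
    have h1 : Filter.Tendsto (fun q => ⟪q, sM q⟫) (U : Filter _) (𝓝 ⟪p, x⟫) :=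
      hid.inner hUx
    have h2 : Filter.Tendsto (fun q => ⟪q, m⟫) (U : Filter _) (𝓝 ⟪p, m⟫) :=
      hid.inner tendsto_const_nhds
    have hev : ∀ᶠ q in (U : Filter _), ⟪q, m⟫ ≤ ⟪q, sM q⟫ :=
      hU (hne.mono fun q hq => (hsM q hq).2 hm)
    exact le_of_tendsto_of_tendsto h2 h1 hev
  rw [hasGradientAt_iff_isLittleO, Asymptotics.isLittleO_iff]
  intro c hc
  have hcont0 : Filter.Tendsto (fun q => ‖sM q - sM p‖) (𝓝 p) (𝓝 0) := by
    simpa only [sub_self, norm_zero] using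
      (hcont.sub (tendsto_const_nhds (x := sM p))).norm
  have hnear : ∀ᶠ q in 𝓝 p, ‖sM q - sM p‖ < c :=
    hcont0.eventually (gt_mem_nhds hc)
  filter_upwards [hne, hnear] with q hq hqn
  show ‖⟪q, sM q⟫ - ⟪p, sM p⟫ - ⟪sM p, q - p⟫‖ ≤ c * ‖q - p‖
  set E : ℝ := ⟪q, sM q⟫ - ⟪p, sM p⟫ - ⟪sM p, q - p⟫ with hEdef
  have hE : E = ⟪q, sM q - sM p⟫ := by
    simp only [hEdef, inner_sub_left, inner_sub_right, real_inner_comm (sM p)]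
    ring
  have h0 : 0 ≤ E := by
    rw [hE, inner_sub_right]
    have := (hsM q hq).2 (hsM p hp).1
    simpa using this
  have hup : E ≤ ⟪q - p, sM q - sM p⟫ := by
    have hps : ⟪p, sM q - sM p⟫ ≤ 0 := by
      rw [inner_sub_right]
      have := (hsM p hp).2 (hsM q hq).1
      simpa using this
    rw [hE]
    have : ⟪q, sM q - sM p⟫ = ⟪q - p, sM q - sM p⟫ + ⟪p, sM q - sM p⟫ := by
      rw [inner_sub_left]; ring
    linarith
  have hbound : E ≤ c * ‖q - p‖ := by
    calc E ≤ ⟪q - p, sM q - sM p⟫ := hup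
    _ ≤ ‖q - p‖ * ‖sM q - sM p‖ := real_inner_le_norm _ _
    _ ≤ ‖q - p‖ * c := by
        exact mul_le_mul_of_nonneg_left hqn.le (norm_nonneg _)
    _ = c * ‖q - p‖ := mul_comm _ _
  rw [Real.norm_of_nonneg h0]
  exact hbound
end

section
/- For strictly convex compact sets R and G in R^n and any nonzero p, q, the lower distance estimate at p is at most the upper estimate at q: (p/‖p‖)·(s_G(−p) − s_R(p)) ≤ ‖s_G(−q) − s_R(q)‖. -/
open RealInnerProductSpace

/-- The lower distance estimate at any nonzero `p` is at most the upper estimate at any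
nonzero `q`: `⟪p/‖p‖, s_G(-p) - s_R(p)⟫ ≤ ‖s_G(-q) - s_R(q)‖`. -/
theorem lower_le_upper {n : ℕ} (R G : Set (EuclideanSpace ℝ (Fin n)))
    (hRc : IsCompact R) (hRs : StrictConvex ℝ R)
    (hGc : IsCompact G) (hGs : StrictConvex ℝ G)
    (sR sG : EuclideanSpace ℝ (Fin n) → EuclideanSpace ℝ (Fin n))
    (hsR : ∀ p : EuclideanSpace ℝ (Fin n), p ≠ 0 →
      sR p ∈ R ∧ IsMaxOn (fun s => ⟪p, s⟫) R (sR p))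
    (hsG : ∀ p : EuclideanSpace ℝ (Fin n), p ≠ 0 →
      sG p ∈ G ∧ IsMaxOn (fun s => ⟪p, s⟫) G (sG p))
    (p q : EuclideanSpace ℝ (Fin n)) (hp : p ≠ 0) (hq : q ≠ 0) :
    ⟪‖p‖⁻¹ • p, sG (-p) - sR p⟫ ≤ ‖sG (-q) - sR q‖ := by
  have hpn : (0:ℝ) < ‖p‖ := norm_pos_iff.mpr hp
  have h1 : ⟪-p, sG (-q)⟫ ≤ ⟪-p, sG (-p)⟫ :=
    (hsG (-p) (neg_ne_zero.mpr hp)).2 (hsG (-q) (neg_ne_zero.mpr hq)).1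
  have h2 : ⟪p, sR q⟫ ≤ ⟪p, sR p⟫ := (hsR p hp).2 (hsR q hq).1
  have h1' : ⟪p, sG (-p)⟫ ≤ ⟪p, sG (-q)⟫ := by
    simp only [inner_neg_left] at h1; linarith
  have key : ⟪p, sG (-p) - sR p⟫ ≤ ⟪p, sG (-q) - sR q⟫ := by
    rw [inner_sub_right, inner_sub_right]; linarith
  have hcs : ⟪p, sG (-q) - sR q⟫ ≤ ‖p‖ * ‖sG (-q) - sR q‖ := real_inner_le_norm _ _
  rw [real_inner_smul_left]
  calc ‖p‖⁻¹ * ⟪p, sG (-p) - sR p⟫ ≤ ‖p‖⁻¹ * (‖p‖ * ‖sG (-q) - sR q‖) := by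
        apply mul_le_mul_of_nonneg_left (le_trans key hcs) (by positivity)
    _ = ‖sG (-q) - sR q‖ := by field_simp
end

section
/- For strictly convex compact sets R and G and nonzero p, the gradient of ρ_lower(p) = ⟨p/‖p‖, s_G(−p) − s_R(p)⟩ with respect to p equals (s_G(−p) − s_R(p))/‖p‖ − (p/‖p‖²)·ρ_lower(p). -/
/-!
The support function `h_M q = ⟪q, s_M q⟫` of a compact set is differentiable at `p ≠ 0` with
gradient `s_M p`: maximality of `s_M q` and `s_M p` squeezes the first-order remainder between
`0` and `‖q - p‖ * ‖s_M q - s_M p‖`, and the unique maximiser `s_M` is continuous at `p` by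
compactness. The numerator of `ρ_lower` is `q ↦ -h_G (-q) - h_R q`, with gradient
`s_G (-p) - s_R p`, and the quotient rule with `∇‖·‖ p = p / ‖p‖` gives the formula.
-/

open RealInnerProductSpace Filter Topology Asymptotics InnerProductSpace

variable {E : Type*} [NormedAddCommGroup E] [InnerProductSpace ℝ E]

section GradientCalculus

variable [CompleteSpace E] {f g : E → ℝ} {f' g' x : E}

theorem HasGradientAt.neg (hf : HasGradientAt f f' x) : HasGradientAt (fun y => -f y) (-f') x := by
  rw [hasGradientAt_iff_hasFDerivAt, map_neg]
  exact hf.hasFDerivAt.neg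

theorem HasGradientAt.sub (hf : HasGradientAt f f' x) (hg : HasGradientAt g g' x) :
    HasGradientAt (fun y => f y - g y) (f' - g') x := by
  rw [hasGradientAt_iff_hasFDerivAt, map_sub]
  exact hf.hasFDerivAt.sub hg.hasFDerivAt

theorem HasGradientAt.comp_neg (hf : HasGradientAt f f' (-x)) :
    HasGradientAt (fun y => f (-y)) (-f') x :=
  (hf.hasFDerivAt.comp x (hasFDerivAt_id x).neg).congr_fderiv <| by ext v; simp

theorem HasGradientAt.div (hf : HasGradientAt f f' x) (hg : HasGradientAt g g' x) (hx : g x ≠ 0) :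
    HasGradientAt (fun y => f y / g y) ((g x)⁻¹ • f' - (f x / g x ^ 2) • g') x := by
  have h := hf.hasFDerivAt.mul ((hasDerivAt_inv hx).comp_hasFDerivAt x hg.hasFDerivAt)
  refine h.congr_fderiv ?_
  ext v
  simp
  ring

theorem hasGradientAt_norm (hx : x ≠ 0) : HasGradientAt (‖·‖) (‖x‖⁻¹ • x) x := by
  have h := (hasStrictFDerivAt_norm_sq x).hasFDerivAt.sqrt (by positivity)
  simp only [Real.sqrt_sq (norm_nonneg _)] at h
  refine h.congr_fderiv ?_
  ext v
  simp
  field_simp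

end GradientCalculus

theorem abs_inner_sub_inner_sub_inner_le {p q a b : E} (hq : ⟪q, b⟫ ≤ ⟪q, a⟫)
    (hp : ⟪p, a⟫ ≤ ⟪p, b⟫) :
    |⟪q, a⟫ - ⟪p, b⟫ - ⟪b, q - p⟫| ≤ ‖q - p‖ * ‖a - b‖ := by
  have hsplit : ⟪q, a⟫ - ⟪p, b⟫ - ⟪b, q - p⟫ = ⟪q - p, a - b⟫ + (⟪p, a⟫ - ⟪p, b⟫) := by
    simp only [inner_sub_left, inner_sub_right, real_inner_comm b]
    ring
  have hlow : ⟪q, a⟫ - ⟪p, b⟫ - ⟪b, q - p⟫ = ⟪q, a⟫ - ⟪q, b⟫ := by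
    simp only [inner_sub_right, real_inner_comm b]
    ring
  rw [abs_le]
  constructor
  · linarith [mul_nonneg (norm_nonneg (q - p)) (norm_nonneg (a - b))]
  · linarith [real_inner_le_norm (q - p) (a - b)]

section ContactFunction

variable {M : Set E} {s : E → E}

theorem IsCompact.continuousAt_of_isMaxOn_inner (hM : IsCompact M)
    (hs : ∀ p : E, p ≠ 0 → s p ∈ M ∧ IsMaxOn (fun x => ⟪p, x⟫) M (s p))
    (huniq : ∀ p : E, p ≠ 0 → ∀ x ∈ M, IsMaxOn (fun y => ⟪p, y⟫) M x → x = s p)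
    {p : E} (hp : p ≠ 0) : ContinuousAt s p := by
  have hne : ∀ᶠ q in 𝓝 p, q ≠ 0 := eventually_ne_nhds hp
  refine hM.tendsto_nhds_of_unique_mapClusterPt (hne.mono fun q hq => (hs q hq).1)
    fun x hxM hx => huniq p hp x hxM fun y hy => ?_
  -- as `x` is a cluster point, `q → p` and `s q → x` along a common nontrivial filter
  set l := comap s (𝓝 x) ⊓ 𝓝 p
  have : l.NeBot := neBot_inf_comap_iff_map'.2 hx
  have hq : Tendsto (fun q => q) l (𝓝 p) := tendsto_id.mono_left inf_le_right
  have hsq : Tendsto s l (𝓝 x) := tendsto_comap.mono_left inf_le_left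
  have hy_lim : Tendsto (fun q => ⟪q, y⟫) l (𝓝 ⟪p, y⟫) := hq.inner tendsto_const_nhds
  have hx_lim : Tendsto (fun q => ⟪q, s q⟫) l (𝓝 ⟪p, x⟫) := hq.inner hsq
  exact le_of_tendsto_of_tendsto hy_lim hx_lim
    ((hne.filter_mono inf_le_right).mono fun q hq0 => (hs q hq0).2 hy)

theorem IsCompact.hasGradientAt_inner_of_isMaxOn [CompleteSpace E] (hM : IsCompact M)
    (hs : ∀ p : E, p ≠ 0 → s p ∈ M ∧ IsMaxOn (fun x => ⟪p, x⟫) M (s p))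
    (huniq : ∀ p : E, p ≠ 0 → ∀ x ∈ M, IsMaxOn (fun y => ⟪p, y⟫) M x → x = s p)
    {p : E} (hp : p ≠ 0) : HasGradientAt (fun q => ⟪q, s q⟫) (s p) p := by
  rw [hasGradientAt_iff_isLittleO]
  have hbound :
      ∀ᶠ q in 𝓝 p, ‖⟪q, s q⟫ - ⟪p, s p⟫ - ⟪s p, q - p⟫‖ ≤ ‖q - p‖ * ‖s q - s p‖ :=
    (eventually_ne_nhds hp).mono fun q hq => abs_inner_sub_inner_sub_inner_le
      ((hs q hq).2 (hs p hp).1) ((hs p hp).2 (hs q hq).1)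
  have hcont : Tendsto (fun q => ‖s q - s p‖) (𝓝 p) (𝓝 0) :=
    tendsto_iff_norm_sub_tendsto_zero.1 (hM.continuousAt_of_isMaxOn_inner hs huniq hp)
  have hsmall : (fun q => ‖q - p‖ * ‖s q - s p‖) =o[𝓝 p] fun q => q - p := by
    simpa using
      (isBigO_refl (fun q => ‖q - p‖) (𝓝 p)).mul_isLittleO ((isLittleO_one_iff ℝ).2 hcont)
  exact (IsBigO.of_norm_eventuallyLE hbound).trans_isLittleO hsmall

end ContactFunction

theorem gradient_rho_lower_general {n : ℕ} (R G : Set (EuclideanSpace ℝ (Fin n)))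
    (hRc : IsCompact R)
    (hGc : IsCompact G)
    (sR sG : EuclideanSpace ℝ (Fin n) → EuclideanSpace ℝ (Fin n))
    (hsR : ∀ p : EuclideanSpace ℝ (Fin n), p ≠ 0 →
      sR p ∈ R ∧ IsMaxOn (fun s => ⟪p, s⟫) R (sR p))
    (hsG : ∀ p : EuclideanSpace ℝ (Fin n), p ≠ 0 →
      sG p ∈ G ∧ IsMaxOn (fun s => ⟪p, s⟫) G (sG p))
    (huniqR : ∀ p : EuclideanSpace ℝ (Fin n), p ≠ 0 →
      ∀ s ∈ R, IsMaxOn (fun x => ⟪p, x⟫) R s → s = sR p)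
    (huniqG : ∀ p : EuclideanSpace ℝ (Fin n), p ≠ 0 →
      ∀ s ∈ G, IsMaxOn (fun x => ⟪p, x⟫) G s → s = sG p)
    (p : EuclideanSpace ℝ (Fin n)) (hp : p ≠ 0) :
    HasGradientAt (fun q => ⟪q, sG (-q) - sR q⟫ / ‖q‖)
      (‖p‖⁻¹ • (sG (-p) - sR p) -
        ((⟪p, sG (-p) - sR p⟫ / ‖p‖) / ‖p‖ ^ 2) • p) p := by
  have hR := hRc.hasGradientAt_inner_of_isMaxOn hsR huniqR hp
  have hG := (hGc.hasGradientAt_inner_of_isMaxOn hsG huniqG (neg_ne_zero.2 hp)).comp_neg.neg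
  have hnum : HasGradientAt (fun q => ⟪q, sG (-q) - sR q⟫) (sG (-p) - sR p) p := by
    convert hG.sub hR using 1
    · ext q
      rw [inner_sub_right, inner_neg_left, neg_neg]
    · rw [neg_neg]
  convert hnum.div (hasGradientAt_norm hp) (norm_ne_zero_iff.2 hp) using 2
  rw [smul_smul]
  field_simp

/-- Gradient of the lower distance estimate `ρ_lower(p) = ⟪p, s_G(-p) - s_R(p)⟫ / ‖p‖`
with respect to `p`: it equals `(s_G(-p) - s_R(p))/‖p‖ - (ρ_lower(p)/‖p‖²) • p`. -/
theorem gradient_rho_lower {n : ℕ} (R G : Set (EuclideanSpace ℝ (Fin n)))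
    (hRc : IsCompact R) (hRs : StrictConvex ℝ R)
    (hGc : IsCompact G) (hGs : StrictConvex ℝ G)
    (sR sG : EuclideanSpace ℝ (Fin n) → EuclideanSpace ℝ (Fin n))
    (hsR : ∀ p : EuclideanSpace ℝ (Fin n), p ≠ 0 →
      sR p ∈ R ∧ IsMaxOn (fun s => ⟪p, s⟫) R (sR p))
    (hsG : ∀ p : EuclideanSpace ℝ (Fin n), p ≠ 0 →
      sG p ∈ G ∧ IsMaxOn (fun s => ⟪p, s⟫) G (sG p))
    (huniqR : ∀ p : EuclideanSpace ℝ (Fin n), p ≠ 0 →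
      ∀ s ∈ R, IsMaxOn (fun x => ⟪p, x⟫) R s → s = sR p)
    (huniqG : ∀ p : EuclideanSpace ℝ (Fin n), p ≠ 0 →
      ∀ s ∈ G, IsMaxOn (fun x => ⟪p, x⟫) G s → s = sG p)
    (p : EuclideanSpace ℝ (Fin n)) (hp : p ≠ 0) :
    HasGradientAt (fun q => ⟪q, sG (-q) - sR q⟫ / ‖q‖)
      (‖p‖⁻¹ • (sG (-p) - sR p) -
        ((⟪p, sG (-p) - sR p⟫ / ‖p‖) / ‖p‖ ^ 2) • p) p :=
  gradient_rho_lower_general R G hRc hGc sR sG hsR hsG huniqR huniqG p hp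
end

section
/- Norm identity for the inclined support vector: if ‖p‖ = 1 and q = (s_G(−p) − s_R(p))/ρ_upper(p) − p with ρ_upper(p) > 0, then for any real γ, ‖p + γq‖² = 1 − 2γ(1−γ)·δ(p)/ρ_upper(p). -/
open RealInnerProductSpace

/-- Norm identity for the inclined support vector: if `‖p‖ = 1` and
`q = (s_G(-p) - s_R(p))/ρ_upper(p) - p` with `ρ_upper(p) > 0`, then for any real `γ`,
`‖p + γq‖² = 1 - 2γ(1-γ)·δ(p)/ρ_upper(p)`. -/
theorem norm_inclined_identity {n : ℕ} (R G : Set (EuclideanSpace ℝ (Fin n)))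
    (hRc : IsCompact R) (hRs : StrictConvex ℝ R)
    (hGc : IsCompact G) (hGs : StrictConvex ℝ G)
    (sR sG : EuclideanSpace ℝ (Fin n) → EuclideanSpace ℝ (Fin n))
    (hsR : ∀ p : EuclideanSpace ℝ (Fin n), p ≠ 0 →
      sR p ∈ R ∧ IsMaxOn (fun s => ⟪p, s⟫) R (sR p))
    (hsG : ∀ p : EuclideanSpace ℝ (Fin n), p ≠ 0 →
      sG p ∈ G ∧ IsMaxOn (fun s => ⟪p, s⟫) G (sG p))
    (p : EuclideanSpace ℝ (Fin n)) (hp : ‖p‖ = 1)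
    (hρu : 0 < ‖sG (-p) - sR p‖)
    (q : EuclideanSpace ℝ (Fin n))
    (hq : q = ‖sG (-p) - sR p‖⁻¹ • (sG (-p) - sR p) - p)
    (γ : ℝ) :
    ‖p + γ • q‖ ^ 2 = 1 - 2 * γ * (1 - γ) *
      ((‖sG (-p) - sR p‖ - ⟪p, sG (-p) - sR p⟫) / ‖sG (-p) - sR p‖) := by
  set v := sG (-p) - sR p with hv
  have hvne : ‖v‖ ≠ 0 := ne_of_gt hρu
  have hpq : p + γ • q = (1 - γ) • p + γ • (‖v‖⁻¹ • v) := by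
    rw [hq]; module
  have hu : ‖‖v‖⁻¹ • v‖ = 1 := by
    rw [norm_smul, norm_inv, norm_norm, inv_mul_cancel₀ hvne]
  have hiu : ⟪p, ‖v‖⁻¹ • v⟫ = ‖v‖⁻¹ * ⟪p, v⟫ := real_inner_smul_right p v _
  rw [hpq, norm_add_sq_real, real_inner_smul_left, real_inner_smul_right,
    norm_smul, norm_smul, hiu, hp, hu]
  simp only [Real.norm_eq_abs, mul_one]
  rw [sq_abs, sq_abs]
  field_simp
  ring
end

section
/- If ‖p‖ = 1, ρ_lower(p) ≥ 0, δ(p) > 0, and 0 ≤ γ ≤ 1, then p + γq ≠ 0 and ‖p + γq‖ ≤ 1, where q = (s_G(−p) − s_R(p))/ρ_upper(p) − p. -/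
open RealInnerProductSpace

/-- If `‖p‖ = 1`, `ρ_lower(p) ≥ 0`, `δ(p) > 0`, and `0 ≤ γ ≤ 1`, then `p + γq ≠ 0` and
`‖p + γq‖ ≤ 1`, where `q = (s_G(-p) - s_R(p))/ρ_upper(p) - p`. -/
theorem inclined_nonzero_norm_le_one {n : ℕ} (R G : Set (EuclideanSpace ℝ (Fin n)))
    (hRc : IsCompact R) (hRs : StrictConvex ℝ R)
    (hGc : IsCompact G) (hGs : StrictConvex ℝ G)
    (sR sG : EuclideanSpace ℝ (Fin n) → EuclideanSpace ℝ (Fin n))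
    (hsR : ∀ p : EuclideanSpace ℝ (Fin n), p ≠ 0 →
      sR p ∈ R ∧ IsMaxOn (fun s => ⟪p, s⟫) R (sR p))
    (hsG : ∀ p : EuclideanSpace ℝ (Fin n), p ≠ 0 →
      sG p ∈ G ∧ IsMaxOn (fun s => ⟪p, s⟫) G (sG p))
    (p : EuclideanSpace ℝ (Fin n)) (hp : ‖p‖ = 1)
    (hρl : 0 ≤ ⟪p, sG (-p) - sR p⟫)
    (hδ : 0 < ‖sG (-p) - sR p‖ - ⟪p, sG (-p) - sR p⟫)
    (q : EuclideanSpace ℝ (Fin n))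
    (hq : q = ‖sG (-p) - sR p‖⁻¹ • (sG (-p) - sR p) - p)
    (γ : ℝ) (hγ0 : 0 ≤ γ) (hγ1 : γ ≤ 1) :
    p + γ • q ≠ 0 ∧ ‖p + γ • q‖ ≤ 1 := by
  set w := sG (-p) - sR p with hw
  have hu : 0 < ‖w‖ := lt_of_le_of_lt hρl (by linarith)
  set v := ‖w‖⁻¹ • w with hv
  have hvn : ‖v‖ = 1 := by
    rw [hv, norm_smul, norm_inv, norm_norm, inv_mul_cancel₀ hu.ne']
  have htdef : ⟪p, v⟫ = ‖w‖⁻¹ * ⟪p, w⟫ := by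
    rw [hv, real_inner_smul_right]
  have ht0 : 0 ≤ ⟪p, v⟫ := by
    rw [htdef]; positivity
  have ht1 : ⟪p, v⟫ < 1 := by
    rw [htdef]
    rw [inv_mul_lt_one₀ hu]
    linarith
  have hsum : p + γ • q = (1 - γ) • p + γ • v := by
    rw [hq]
    simp [smul_sub, sub_smul]
    abel
  set t := ⟪p, v⟫ with ht
  have hsq : ‖p + γ • q‖ ^ 2 = 1 - 2 * γ * (1 - γ) * (1 - t) := by
    have h1 : ⟪p, p⟫ = (1 : ℝ) := by
      rw [real_inner_self_eq_norm_sq, hp]; norm_num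
    have h2 : ⟪v, v⟫ = (1 : ℝ) := by
      rw [real_inner_self_eq_norm_sq, hvn]; norm_num
    rw [hsum, ← real_inner_self_eq_norm_sq, inner_add_add_self]
    simp only [real_inner_smul_left, real_inner_smul_right]
    rw [h1, h2, ht]
    ring_nf
    rw [real_inner_comm v p]; ring
  have hγγ : γ * (1 - γ) ≤ 1 / 4 := by nlinarith [sq_nonneg (2 * γ - 1)]
  have hprod : 0 ≤ γ * (1 - γ) * (1 - t) :=
    mul_nonneg (mul_nonneg hγ0 (by linarith)) (by linarith)
  have hsqpos : 0 < ‖p + γ • q‖ ^ 2 := by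
    rw [hsq]; nlinarith
  have hsqle : ‖p + γ • q‖ ^ 2 ≤ 1 := by
    rw [hsq]; nlinarith
  constructor
  · intro h
    rw [h, norm_zero] at hsqpos
    norm_num at hsqpos
  · nlinarith [norm_nonneg (p + γ • q)]
end

section
/- Monotonicity of ξ': let R, G be strictly convex compact sets, ‖p‖ = 1, δ(p) > 0, ρ_lower(p) ≥ 0, and q = (s_G(−p) − s_R(p))/ρ_upper(p) − p. Define ξ'(γ) = ⟨q, s_G(−(p + γq)) − s_R(p + γq)⟩ on the set where p + γq ≠ 0. Then ξ'(0) = δ(p) > 0 and ξ' is non-increasing in γ. -/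
open RealInnerProductSpace

/-- Monotonicity of contact functions. -/
lemma contact_mono {n : ℕ} {M : Set (EuclideanSpace ℝ (Fin n))}
    {s : EuclideanSpace ℝ (Fin n) → EuclideanSpace ℝ (Fin n)}
    (hs : ∀ p : EuclideanSpace ℝ (Fin n), p ≠ 0 →
      s p ∈ M ∧ IsMaxOn (fun x => ⟪p, x⟫) M (s p))
    {a b : EuclideanSpace ℝ (Fin n)} (ha : a ≠ 0) (hb : b ≠ 0) :
    0 ≤ ⟪a - b, s a - s b⟫ := by
  obtain ⟨hma, hMa⟩ := hs a ha
  obtain ⟨hmb, hMb⟩ := hs b hb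
  have h1 : ⟪a, s b⟫ ≤ ⟪a, s a⟫ := hMa hmb
  have h2 : ⟪b, s a⟫ ≤ ⟪b, s b⟫ := hMb hma
  simp only [inner_sub_left, inner_sub_right]
  linarith

/-- Monotonicity of `ξ'`: with `q = (s_G(-p) - s_R(p))/ρ_upper(p) - p` for a unit vector
`p` with `δ(p) > 0` and `ρ_lower(p) ≥ 0`, the function
`ξ'(γ) = ⟪q, s_G(-(p + γq)) - s_R(p + γq)⟫` satisfies `ξ'(0) = δ(p) > 0` and is
non-increasing on the set where `p + γq ≠ 0`. -/
theorem xi_prime_monotone {n : ℕ} (R G : Set (EuclideanSpace ℝ (Fin n)))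
    (hRc : IsCompact R) (hRs : StrictConvex ℝ R)
    (hGc : IsCompact G) (hGs : StrictConvex ℝ G)
    (sR sG : EuclideanSpace ℝ (Fin n) → EuclideanSpace ℝ (Fin n))
    (hsR : ∀ p : EuclideanSpace ℝ (Fin n), p ≠ 0 →
      sR p ∈ R ∧ IsMaxOn (fun s => ⟪p, s⟫) R (sR p))
    (hsG : ∀ p : EuclideanSpace ℝ (Fin n), p ≠ 0 →
      sG p ∈ G ∧ IsMaxOn (fun s => ⟪p, s⟫) G (sG p))
    (p : EuclideanSpace ℝ (Fin n)) (hp : ‖p‖ = 1)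
    (hρl : 0 ≤ ⟪p, sG (-p) - sR p⟫)
    (hδ : 0 < ‖sG (-p) - sR p‖ - ⟪p, sG (-p) - sR p⟫)
    (q : EuclideanSpace ℝ (Fin n))
    (hq : q = ‖sG (-p) - sR p‖⁻¹ • (sG (-p) - sR p) - p) :
    (⟪q, sG (-(p + (0:ℝ) • q)) - sR (p + (0:ℝ) • q)⟫ =
        ‖sG (-p) - sR p‖ - ⟪p, sG (-p) - sR p⟫) ∧
      AntitoneOn (fun γ : ℝ => ⟪q, sG (-(p + γ • q)) - sR (p + γ • q)⟫)
        {γ : ℝ | p + γ • q ≠ 0} := by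
  set d := sG (-p) - sR p with hd
  have hnd : 0 < ‖d‖ := by linarith
  constructor
  · have : p + (0:ℝ) • q = p := by simp
    rw [this, hq]
    rw [inner_sub_left, real_inner_smul_left, real_inner_self_eq_norm_sq]
    have h2 : ‖d‖⁻¹ * ‖d‖ ^ 2 = ‖d‖ := by
      field_simp
    rw [h2]
  · intro γ₁ h₁ γ₂ h₂ hle
    rcases eq_or_lt_of_le hle with h | h
    · subst h; exact le_refl _
    · simp only [Set.mem_setOf_eq] at h₁ h₂
      have key1 : 0 ≤ ⟪(p + γ₂ • q) - (p + γ₁ • q), sR (p + γ₂ • q) - sR (p + γ₁ • q)⟫ :=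
        contact_mono hsR h₂ h₁
      have key2 : 0 ≤ ⟪(-(p + γ₂ • q)) - (-(p + γ₁ • q)),
          sG (-(p + γ₂ • q)) - sG (-(p + γ₁ • q))⟫ :=
        contact_mono hsG (neg_ne_zero.mpr h₂) (neg_ne_zero.mpr h₁)
      have hsub : (p + γ₂ • q) - (p + γ₁ • q) = (γ₂ - γ₁) • q := by
        module
      rw [hsub, real_inner_smul_left] at key1
      have hsub2 : (-(p + γ₂ • q)) - (-(p + γ₁ • q)) = (-(γ₂ - γ₁)) • q := by
        module
      rw [hsub2, real_inner_smul_left] at key2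
      have hpos : 0 < γ₂ - γ₁ := by linarith
      have hA : 0 ≤ ⟪q, sR (p + γ₂ • q) - sR (p + γ₁ • q)⟫ :=
        nonneg_of_mul_nonneg_right key1 hpos
      have hB : ⟪q, sG (-(p + γ₂ • q)) - sG (-(p + γ₁ • q))⟫ ≤ 0 := by
        nlinarith
      simp only [inner_sub_right] at hA hB ⊢
      linarith
end
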